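/- arXiv:2105.07121 — 2 statements merged into one kernel-verified Lean document; each statement's English description precedes it below -/
import Mathlib

section
/- For all z, z̃ ∈ ℝ^n and all projections x ∈ Π^B_{Ω_s}(z) and x̃ ∈ Π^B_{Ω_s}(z̃), the inequality (1/2)‖x‖² + (1/2)‖x̃‖² ≥ ⟨x̃, z⟩ holds. -/
open scoped BigOperators RealInnerProductSpace

noncomputable section

/-- `Omega n s` is the set `Ω_s = {x ∈ ℝ^n : #{i : x_i > 0} ≤ s}`. -/
def Omega (n s : ℕ) : Set (EuclideanSpace ℝ (Fin n)) :=
  {x | (Finset.univ.filter fun i => 0 < x i).card ≤ s}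

/-- `projSet n s z` is the set `Π^B_{Ω_s}(z)` of Euclidean projections of `z` onto `Ω_s`. -/
def projSet (n s : ℕ) (z : EuclideanSpace ℝ (Fin n)) : Set (EuclideanSpace ℝ (Fin n)) :=
  {x | x ∈ Omega n s ∧ ‖z - x‖ = Metric.infDist z (Omega n s)}

lemma smul_mem_Omega' {n s : ℕ} {x : EuclideanSpace ℝ (Fin n)} {t : ℝ} (ht : 0 < t)
    (hx : x ∈ Omega n s) : t • x ∈ Omega n s := by
  unfold Omega at *
  have hset : (Finset.univ.filter fun i => 0 < (t • x) i)
      = (Finset.univ.filter fun i => 0 < x i) := by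
    apply Finset.filter_congr
    intro i _
    have : (t • x) i = t * x i := rfl
    rw [this]
    constructor
    · intro h
      nlinarith
    · intro h
      exact mul_pos ht h
  show (Finset.univ.filter fun i => 0 < (t • x) i).card ≤ s
  rw [hset]; exact hx

lemma proj_min {n s : ℕ} {z x : EuclideanSpace ℝ (Fin n)}
    (hx : x ∈ projSet n s z) : ∀ y ∈ Omega n s, ‖z - x‖ ≤ ‖z - y‖ := by
  intro y hy
  rw [hx.2, ← dist_eq_norm]
  exact Metric.infDist_le_dist_of_mem hy

lemma inner_le_norm_sq' {n s : ℕ} {z x : EuclideanSpace ℝ (Fin n)}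
    (hx : x ∈ projSet n s z) : ⟪z, x⟫ ≤ ‖x‖ ^ 2 := by
  have hmin := proj_min hx
  have key : ∀ ε : ℝ, 0 < ε → 2 * ε * ⟪z, x⟫ ≤ (2 * ε + ε ^ 2) * ‖x‖ ^ 2 := by
    intro ε hε
    have hy : (1 + ε) • x ∈ Omega n s := smul_mem_Omega' (by linarith) hx.1
    have h := hmin _ hy
    have h2 : ‖z - x‖ ^ 2 ≤ ‖z - (1 + ε) • x‖ ^ 2 :=
      pow_le_pow_left₀ (norm_nonneg _) h 2
    rw [norm_sub_sq_real, norm_sub_sq_real, inner_smul_right, norm_smul] at h2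
    have habs : |1 + ε| = 1 + ε := abs_of_pos (by linarith)
    rw [Real.norm_eq_abs, habs] at h2
    nlinarith [h2]
  by_contra hlt
  push_neg at hlt
  have hx0 : 0 < ‖x‖ ^ 2 := by
    rcases lt_or_eq_of_le (sq_nonneg ‖x‖) with h | h
    · exact h
    · exfalso
      have : x = 0 := by
        have := h.symm
        have : ‖x‖ = 0 := by nlinarith [norm_nonneg x]
        simpa using this
      rw [this] at hlt
      simp at hlt
  set ε := (⟪z, x⟫ - ‖x‖ ^ 2) / ‖x‖ ^ 2 with hεdef
  have hεpos : 0 < ε := div_pos (by linarith) hx0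
  have := key ε hεpos
  have hεval : ε * ‖x‖ ^ 2 = ⟪z, x⟫ - ‖x‖ ^ 2 := by
    rw [hεdef]
    exact div_mul_cancel₀ _ hx0.ne'
  nlinarith [this, hεval, mul_pos hεpos hx0, sq_nonneg ε]

/-- For all `z, z̃ ∈ ℝ^n`, `x ∈ Π^B_{Ω_s}(z)` and `x̃ ∈ Π^B_{Ω_s}(z̃)`:
`(1/2)‖x‖² + (1/2)‖x̃‖² ≥ ⟨x̃, z⟩`. -/
theorem stmt_5 (n s : ℕ) (hn : 0 < n) (hs : 0 < s) (hsn : s ≤ n)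
    (z zt x xt : EuclideanSpace ℝ (Fin n))
    (hx : x ∈ projSet n s z) (hxt : xt ∈ projSet n s zt) :
    (1 / 2) * ‖x‖ ^ 2 + (1 / 2) * ‖xt‖ ^ 2 ≥ ⟪xt, z⟫ := by
  have h1 : ‖z - x‖ ≤ ‖z - xt‖ := proj_min hx _ hxt.1
  have h2 : ‖z - x‖ ^ 2 ≤ ‖z - xt‖ ^ 2 := pow_le_pow_left₀ (norm_nonneg _) h1 2
  rw [norm_sub_sq_real, norm_sub_sq_real] at h2
  have h3 : ⟪z, x⟫ ≤ ‖x‖ ^ 2 := inner_le_norm_sq' hx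
  have h4 : ⟪xt, z⟫ = ⟪z, xt⟫ := real_inner_comm _ _
  nlinarith [h2, h3, h4]
end
end

section
/- Let (θ^k) be a sequence in ℝ^{m+1} generated by the majorization penalty method: for every k there is a projection x_k ∈ Π^B_{Ω_s}(1_n − Q̄θ^k) such that (PᵀP + ρ Q̄ᵀQ̄) θ^{k+1} = ρ Q̄ᵀ(1_n − x_k). Then F_ρ(θ^{k+1}) − F_ρ(θ^k) ≤ −(λ_min/2)‖θ^{k+1} − θ^k‖² for all k, where λ_min > 0 is the smallest eigenvalue of PᵀP + ρQᵀQ; consequently the sequence (F_ρ(θ^k)) is nonincreasing and converges, and ‖θ^{k+1} − θ^k‖ → 0 as k → ∞. -/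
open scoped BigOperators Matrix Topology

noncomputable section

/-- Regard a plain vector in `Fin n → ℝ` as an element of Euclidean space. -/
def toEuc {n : ℕ} (v : Fin n → ℝ) : EuclideanSpace ℝ (Fin n) :=
  (WithLp.equiv 2 (Fin n → ℝ)).symm v

lemma norm_toEuc_sq {n : ℕ} (v : Fin n → ℝ) : ‖toEuc v‖ ^ 2 = v ⬝ᵥ v := by
  rw [EuclideanSpace.norm_eq, Real.sq_sqrt (by positivity)]
  simp [dotProduct, toEuc, sq]

lemma dot_tP {a N : ℕ} (P : Matrix (Fin a) (Fin N) ℝ) (u : Fin N → ℝ) (w : Fin a → ℝ) :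
    u ⬝ᵥ (Pᵀ *ᵥ w) = (P *ᵥ u) ⬝ᵥ w := by
  rw [Matrix.dotProduct_mulVec, Matrix.vecMul_transpose]

lemma dot_mulVec_left {a b : ℕ} (A : Matrix (Fin a) (Fin b) ℝ) (u : Fin a → ℝ) (w : Fin b → ℝ) :
    u ⬝ᵥ (A *ᵥ w) = (Aᵀ *ᵥ u) ⬝ᵥ w := by
  rw [Matrix.dotProduct_mulVec, ← Matrix.mulVec_transpose]

lemma dot_self_pos {ι : Type*} [Fintype ι] {v : ι → ℝ} (hv : v ≠ 0) : 0 < v ⬝ᵥ v :=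
  lt_of_le_of_ne (Finset.sum_nonneg fun i _ => mul_self_nonneg _)
    (fun h => hv (by rwa [eq_comm, dotProduct_self_eq_zero] at h))

lemma dot_self_nonneg' {ι : Type*} [Fintype ι] (v : ι → ℝ) : 0 ≤ v ⬝ᵥ v :=
  Finset.sum_nonneg fun i _ => mul_self_nonneg _

lemma quad_eq {a b N : ℕ} (P : Matrix (Fin a) (Fin N) ℝ) (Q : Matrix (Fin b) (Fin N) ℝ)
    (ρ : ℝ) (u v : Fin N → ℝ) :
    u ⬝ᵥ ((Pᵀ * P + ρ • (Qᵀ * Q)) *ᵥ v)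
      = (P *ᵥ u) ⬝ᵥ (P *ᵥ v) + ρ * ((Q *ᵥ u) ⬝ᵥ (Q *ᵥ v)) := by
  simp only [Matrix.add_mulVec, Matrix.smul_mulVec, ← Matrix.mulVec_mulVec,
    dotProduct_add, dotProduct_smul, smul_eq_mul, dot_tP]

lemma gdiff {a b N : ℕ} (P : Matrix (Fin a) (Fin N) ℝ) (Qb : Matrix (Fin b) (Fin N) ℝ)
    (ρ : ℝ) (c : Fin b → ℝ) (θ0 θ1 : Fin N → ℝ)
    (h : (Pᵀ * P + ρ • (Qbᵀ * Qb)) *ᵥ θ1 = ρ • (Qbᵀ *ᵥ c)) :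
    ((1/2) * ((P *ᵥ θ1) ⬝ᵥ (P *ᵥ θ1)) + (ρ/2) * ((c - Qb *ᵥ θ1) ⬝ᵥ (c - Qb *ᵥ θ1)))
      - ((1/2) * ((P *ᵥ θ0) ⬝ᵥ (P *ᵥ θ0)) + (ρ/2) * ((c - Qb *ᵥ θ0) ⬝ᵥ (c - Qb *ᵥ θ0)))
      = -(1/2) * ((θ1 - θ0) ⬝ᵥ ((Pᵀ * P + ρ • (Qbᵀ * Qb)) *ᵥ (θ1 - θ0))) := by
  have h0 := congrArg (fun v => θ0 ⬝ᵥ v) h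
  have h1 := congrArg (fun v => θ1 ⬝ᵥ v) h
  simp only [Matrix.add_mulVec, Matrix.smul_mulVec, ← Matrix.mulVec_mulVec,
    dotProduct_add, dotProduct_smul, smul_eq_mul, dotProduct_sub,
    sub_dotProduct, Matrix.mulVec_sub, dot_tP] at h0 h1 ⊢
  linear_combination h1 - h0 + (ρ/2) * dotProduct_comm c (Qb *ᵥ θ0)
    - (ρ/2) * dotProduct_comm c (Qb *ᵥ θ1)
    + (1/2 : ℝ) * dotProduct_comm (P *ᵥ θ0) (P *ᵥ θ1)
    + (ρ/2) * dotProduct_comm (Qb *ᵥ θ0) (Qb *ᵥ θ1)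

lemma Mpos {n m : ℕ} (hn : 0 < n) (A : Matrix (Fin n) (Fin m) ℝ) (ρ : ℝ) (hρ : 0 < ρ)
    (P : Matrix (Fin m) (Fin (m + 1)) ℝ)
    (hP : ∀ i j, P i j = if (j : ℕ) = (i : ℕ) then 1 else 0)
    (Q : Matrix (Fin n) (Fin (m + 1)) ℝ)
    (hQ : ∀ i j, Q i j = if h : (j : ℕ) < m then A i ⟨j, h⟩ else 1) :
    (Pᵀ * P + ρ • (Qᵀ * Q)).PosDef := by
  rw [Matrix.posDef_iff_dotProduct_mulVec]
  constructor
  · show _ = _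
    rw [Matrix.conjTranspose_eq_transpose_of_trivial]
    simp [Matrix.transpose_add, Matrix.transpose_smul, Matrix.transpose_mul,
      Matrix.transpose_transpose]
  · intro x hx
    have hsx : star x = x := by simp
    rw [hsx, quad_eq]
    have key : ¬ (P *ᵥ x = 0 ∧ Q *ᵥ x = 0) := by
      rintro ⟨hPx, hQx⟩
      apply hx
      have hxj : ∀ j : Fin (m + 1), (j : ℕ) < m → x j = 0 := by
        intro j hj
        have := congrFun hPx ⟨j, hj⟩
        simp only [Matrix.mulVec, dotProduct, Pi.zero_apply] at this
        rw [Finset.sum_eq_single j] at this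
        · simpa [hP] using this
        · intro b _ hbj
          simp [hP, show (b : ℕ) ≠ (j : ℕ) from fun h => hbj (Fin.ext h)]
        · simp
      have hlast : x (Fin.last m) = 0 := by
        have := congrFun hQx ⟨0, hn⟩
        simp only [Matrix.mulVec, dotProduct, Pi.zero_apply] at this
        rw [Finset.sum_eq_single (Fin.last m)] at this
        · simpa [hQ] using this
        · intro b _ hbl
          have hb : (b : ℕ) < m := by
            have := b.isLt; rcases Nat.lt_succ_iff_lt_or_eq.mp this with h | h
            · exact h
            · exact absurd (Fin.ext h : b = Fin.last m) hbl
          rw [hxj b hb, mul_zero]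
        · simp
      funext j
      by_cases hj : (j : ℕ) < m
      · exact hxj j hj
      · have : j = Fin.last m := Fin.ext (by rw [Fin.val_last]; have := j.isLt; omega)
        rw [this]; exact hlast
    by_cases hP0 : P *ᵥ x = 0
    · have hQ0 : Q *ᵥ x ≠ 0 := fun h => key ⟨hP0, h⟩
      exact add_pos_of_nonneg_of_pos (dot_self_nonneg' _) (mul_pos hρ (dot_self_pos hQ0))
    · exact add_pos_of_pos_of_nonneg (dot_self_pos hP0)
        (mul_nonneg hρ.le (dot_self_nonneg' _))

lemma rayleigh {N : ℕ} {M : Matrix (Fin N) (Fin N) ℝ} (hM : M.IsHermitian)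
    {lam : ℝ} (hlam : ∀ i, lam ≤ hM.eigenvalues i) (v : Fin N → ℝ) :
    lam * (v ⬝ᵥ v) ≤ v ⬝ᵥ (M *ᵥ v) := by
  set U : Matrix (Fin N) (Fin N) ℝ := (hM.eigenvectorUnitary : Matrix (Fin N) (Fin N) ℝ) with hU
  have hsU : star U = Uᵀ := by
    rw [Matrix.star_eq_conjTranspose, Matrix.conjTranspose_eq_transpose_of_trivial]
  have hUU : U * Uᵀ = 1 := by
    rw [← hsU]; exact (Matrix.mem_unitaryGroup_iff).mp hM.eigenvectorUnitary.2
  have hspec := hM.spectral_theorem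
  have hD : Matrix.diagonal (RCLike.ofReal ∘ hM.eigenvalues) = Matrix.diagonal hM.eigenvalues := by
    congr 1
  rw [Unitary.conjStarAlgAut_apply, ← hU] at hspec
  rw [hsU, hD] at hspec
  set w : Fin N → ℝ := Uᵀ *ᵥ v with hw
  have hww : w ⬝ᵥ w = v ⬝ᵥ v := by
    rw [hw, dot_mulVec_left, Matrix.transpose_transpose, Matrix.mulVec_mulVec, hUU,
      Matrix.one_mulVec, dotProduct_comm]
  have hvMv : v ⬝ᵥ (M *ᵥ v) = w ⬝ᵥ (Matrix.diagonal hM.eigenvalues *ᵥ w) := by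
    conv_lhs => rw [hspec]
    rw [← Matrix.mulVec_mulVec, ← Matrix.mulVec_mulVec, dot_mulVec_left, ← hw]
  rw [hvMv, ← hww]
  simp only [dotProduct, Matrix.mulVec_diagonal, Finset.mul_sum]
  refine Finset.sum_le_sum fun i _ => ?_
  nlinarith [hlam i, mul_self_nonneg (w i)]

lemma hasEig {N : ℕ} {M : Matrix (Fin N) (Fin N) ℝ} (hM : M.IsHermitian) (i0 : Fin N) :
    Module.End.HasEigenvalue (Matrix.toLin' M) (hM.eigenvalues i0) := by
  apply Module.End.hasEigenvalue_of_hasEigenvector (x := ⇑(hM.eigenvectorBasis i0))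
  constructor
  · rw [Module.End.mem_eigenspace_iff, Matrix.toLin'_apply]
    exact hM.mulVec_eigenvectorBasis i0
  · intro h
    exact hM.eigenvectorBasis.orthonormal.ne_zero i0 (by ext j; exact congrFun h j)

/-- For the sequence `(θ^k)` generated by the majorization penalty method,
`F_ρ(θ^{k+1}) − F_ρ(θ^k) ≤ −(λ_min/2)‖θ^{k+1} − θ^k‖²` where `λ_min > 0` is the smallest
eigenvalue of `PᵀP + ρQᵀQ`; hence `(F_ρ(θ^k))` is nonincreasing and converges, and
`‖θ^{k+1} − θ^k‖ → 0`. -/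
theorem stmt_13 (n m s : ℕ) (hn : 0 < n) (hm : 0 < m) (hs : 0 < s) (hsn : s ≤ n)
    (A : Matrix (Fin n) (Fin m) ℝ) (y : Fin n → ℝ) (hy : ∀ i, y i = 1 ∨ y i = -1)
    (ρ : ℝ) (hρ : 0 < ρ)
    (P : Matrix (Fin m) (Fin (m + 1)) ℝ)
    (hP : ∀ i j, P i j = if (j : ℕ) = (i : ℕ) then 1 else 0)
    (Q : Matrix (Fin n) (Fin (m + 1)) ℝ)
    (hQ : ∀ i j, Q i j = if h : (j : ℕ) < m then A i ⟨j, h⟩ else 1)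
    (Qb : Matrix (Fin n) (Fin (m + 1)) ℝ) (hQb : Qb = Matrix.diagonal y * Q)
    (F : (Fin (m + 1) → ℝ) → ℝ)
    (hF : ∀ θ, F θ = (1 / 2) * ‖toEuc (P.mulVec θ)‖ ^ 2
      + (ρ / 2) * Metric.infDist (toEuc (1 - Qb.mulVec θ)) (Omega n s) ^ 2)
    (θ : ℕ → Fin (m + 1) → ℝ)
    (hiter : ∀ k, ∃ x ∈ projSet n s (toEuc (1 - Qb.mulVec (θ k))),
      (P.transpose * P + ρ • (Qb.transpose * Qb)).mulVec (θ (k + 1))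
        = ρ • Qb.transpose.mulVec fun i => 1 - x i) :
    (∃ lam : ℝ, 0 < lam ∧
      Module.End.HasEigenvalue
        (Matrix.toLin' (P.transpose * P + ρ • (Q.transpose * Q))) lam ∧
      (∀ μ : ℝ, Module.End.HasEigenvalue
        (Matrix.toLin' (P.transpose * P + ρ • (Q.transpose * Q))) μ → lam ≤ μ) ∧
      ∀ k : ℕ, F (θ (k + 1)) - F (θ k) ≤ -(lam / 2) * ‖toEuc (θ (k + 1) - θ k)‖ ^ 2) ∧
    Antitone (fun k => F (θ k)) ∧
    (∃ L : ℝ, Filter.Tendsto (fun k => F (θ k)) Filter.atTop (𝓝 L)) ∧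
    Filter.Tendsto (fun k => ‖toEuc (θ (k + 1) - θ k)‖) Filter.atTop (𝓝 0) := by
  classical
  -- Q̄ᵀQ̄ = QᵀQ
  have hyy : (Matrix.diagonal fun i => y i * y i) = (1 : Matrix (Fin n) (Fin n) ℝ) := by
    rw [show (fun i => y i * y i) = fun _ : Fin n => (1 : ℝ) from
      funext fun i => by rcases hy i with h | h <;> simp [h]]
    exact Matrix.diagonal_one
  have hQbQ : Qbᵀ * Qb = Qᵀ * Q := by
    subst hQb
    rw [Matrix.transpose_mul, Matrix.diagonal_transpose, Matrix.mul_assoc,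
      ← Matrix.mul_assoc (Matrix.diagonal y), Matrix.diagonal_mul_diagonal, hyy,
      Matrix.one_mul]
  have hMpd : (Pᵀ * P + ρ • (Qᵀ * Q)).PosDef := Mpos hn A ρ hρ P hP Q hQ
  have hMH := hMpd.1
  -- minimal eigenvalue
  obtain ⟨i0, -, hi0⟩ := Finset.exists_min_image Finset.univ hMH.eigenvalues
    ⟨(0 : Fin (m + 1)), Finset.mem_univ _⟩
  set lam := hMH.eigenvalues i0 with hlamdef
  have hlampos : 0 < lam := hMpd.eigenvalues_pos i0
  have hlamle : ∀ i, lam ≤ hMH.eigenvalues i := fun i => hi0 i (Finset.mem_univ i)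
  have hray := rayleigh hMH hlamle
  -- descent inequality
  have hdesc : ∀ k : ℕ, F (θ (k + 1)) - F (θ k)
      ≤ -(lam / 2) * ‖toEuc (θ (k + 1) - θ k)‖ ^ 2 := by
    intro k
    obtain ⟨x, hxmem, heq⟩ := hiter k
    set c : Fin n → ℝ := fun i => 1 - x i with hc
    have hz : ∀ t : Fin (m + 1) → ℝ,
        toEuc (1 - Qb.mulVec t) - x = toEuc (c - Qb *ᵥ t) := by
      intro t
      ext i
      show (1 - Qb.mulVec t) i - x i = (c - Qb *ᵥ t) i
      simp only [Pi.sub_apply, Pi.one_apply, hc]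
      ring
    have hFk : F (θ k) = (1/2) * ((P *ᵥ θ k) ⬝ᵥ (P *ᵥ θ k))
        + (ρ/2) * ((c - Qb *ᵥ θ k) ⬝ᵥ (c - Qb *ᵥ θ k)) := by
      rw [hF, norm_toEuc_sq, ← hxmem.2, hz (θ k), norm_toEuc_sq]
    have hFk1 : F (θ (k + 1)) ≤ (1/2) * ((P *ᵥ θ (k + 1)) ⬝ᵥ (P *ᵥ θ (k + 1)))
        + (ρ/2) * ((c - Qb *ᵥ θ (k + 1)) ⬝ᵥ (c - Qb *ᵥ θ (k + 1))) := by
      rw [hF, norm_toEuc_sq]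
      have h1 : Metric.infDist (toEuc (1 - Qb.mulVec (θ (k + 1)))) (Omega n s)
          ≤ ‖toEuc (1 - Qb.mulVec (θ (k + 1))) - x‖ := by
        rw [← dist_eq_norm]; exact Metric.infDist_le_dist_of_mem hxmem.1
      have h2 := pow_le_pow_left₀ Metric.infDist_nonneg h1 2
      rw [hz (θ (k + 1)), norm_toEuc_sq] at h2
      have h3 : (ρ/2) * (Metric.infDist (toEuc (1 - Qb.mulVec (θ (k + 1)))) (Omega n s)) ^ 2
          ≤ (ρ/2) * ((c - Qb *ᵥ θ (k + 1)) ⬝ᵥ (c - Qb *ᵥ θ (k + 1))) :=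
        mul_le_mul_of_nonneg_left h2 (by linarith)
      linarith
    have hgd := gdiff P Qb ρ c (θ k) (θ (k + 1)) heq
    rw [hQbQ] at hgd
    have hub := hray (θ (k + 1) - θ k)
    rw [norm_toEuc_sq]
    linarith [hFk1, hFk.le, hgd, hub]
  -- antitone
  have hanti : Antitone fun k => F (θ k) := by
    apply antitone_nat_of_succ_le
    intro k
    have h1 := hdesc k
    nlinarith [sq_nonneg ‖toEuc (θ (k + 1) - θ k)‖]
  -- nonneg, convergence
  have hFnn : ∀ t, 0 ≤ F t := by
    intro t
    rw [hF]
    have := Metric.infDist_nonneg (x := toEuc (1 - Qb.mulVec t)) (s := Omega n s)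
    positivity
  have hbdd : BddBelow (Set.range fun k => F (θ k)) :=
    ⟨0, by rintro _ ⟨k, rfl⟩; exact hFnn _⟩
  have hL : Filter.Tendsto (fun k => F (θ k)) Filter.atTop (𝓝 (⨅ k, F (θ k))) :=
    tendsto_atTop_ciInf hanti hbdd
  set L := ⨅ k, F (θ k) with hLdef
  -- last limit
  have hf1 : Filter.Tendsto (fun k => F (θ (k + 1))) Filter.atTop (𝓝 L) :=
    hL.comp (Filter.tendsto_add_atTop_nat 1)
  have hg : Filter.Tendsto (fun k => F (θ k) - F (θ (k + 1))) Filter.atTop (𝓝 0) := by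
    simpa using hL.sub hf1
  have hsq : Filter.Tendsto (fun k => (lam/2) * ‖toEuc (θ (k + 1) - θ k)‖ ^ 2)
      Filter.atTop (𝓝 0) := by
    apply squeeze_zero (fun k => mul_nonneg (by linarith) (sq_nonneg _))
      (fun k => by have := hdesc k; linarith) hg
  have hsq2 : Filter.Tendsto (fun k => ‖toEuc (θ (k + 1) - θ k)‖ ^ 2)
      Filter.atTop (𝓝 0) := by
    have h2 := hsq.const_mul (2 / lam)
    rw [mul_zero] at h2
    convert h2 using 2 with k
    field_simp
  have hlim : Filter.Tendsto (fun k => ‖toEuc (θ (k + 1) - θ k)‖) Filter.atTop (𝓝 0) := by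
    have h3 : Filter.Tendsto (fun k => Real.sqrt (‖toEuc (θ (k + 1) - θ k)‖ ^ 2))
        Filter.atTop (𝓝 (Real.sqrt 0)) :=
      (Real.continuous_sqrt.continuousAt).tendsto.comp hsq2
    rw [Real.sqrt_zero] at h3
    have heqf : (fun k => Real.sqrt (‖toEuc (θ (k + 1) - θ k)‖ ^ 2))
        = fun k => ‖toEuc (θ (k + 1) - θ k)‖ :=
      funext fun k => Real.sqrt_sq (norm_nonneg _)
    rwa [heqf] at h3
  exact ⟨⟨lam, hlampos, hasEig hMH i0, by
      intro μ hμ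
      obtain ⟨v, hv⟩ := hμ.exists_hasEigenvector
      have hv1 : (Pᵀ * P + ρ • (Qᵀ * Q)) *ᵥ v = μ • v := by
        have := hv.apply_eq_smul
        rwa [Matrix.toLin'_apply] at this
      have h := hray v
      rw [hv1, dotProduct_smul, smul_eq_mul] at h
      exact le_of_mul_le_mul_right h (dot_self_pos hv.right), hdesc⟩,
    hanti, ⟨L, hL⟩, hlim⟩
end
end
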